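/- arXiv:1702.06150 — 2 statements merged into one kernel-verified Lean document; each statement's English description precedes it below -/
import Mathlib

section
/- For every n ≥ 1, the map that takes a Dyck path of semilength n with all peaks at odd height, deletes its first and last steps, splits the remaining 2n−2 steps into n−1 contiguous pairs, and replaces each pair (U,U) by U, each pair (D,U) by F, and each pair (D,D) by D, is a bijection from the set of Dyck paths of semilength n with all peaks at odd height onto the set of Motzkin paths of length n−1. -/
/-- A Dyck path: each step is +1 (upstep U) or -1 (downstep D), all partial sums
are nonnegative, and the total sum is 0. -/
def IsDyckPath (P : List ℤ) : Prop :=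
  (∀ s ∈ P, s = 1 ∨ s = -1) ∧ (∀ k, 0 ≤ (P.take k).sum) ∧ P.sum = 0

/-- A Motzkin path: each step is +1 (U), 0 (F), or -1 (D), all partial sums
are nonnegative, and the total sum is 0. -/
def IsMotzkinPath (M : List ℤ) : Prop :=
  (∀ s ∈ M, s = 1 ∨ s = 0 ∨ s = -1) ∧ (∀ k, 0 ≤ (M.take k).sum) ∧ M.sum = 0

/-- A peak at position `i`: an upstep at `i` immediately followed by a downstep. -/
def IsPeak (P : List ℤ) (i : ℕ) : Prop :=
  P[i]? = some 1 ∧ P[i + 1]? = some (-1)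

/-- The height of the peak at position `i`: the level reached just after the upstep. -/
def peakHeight (P : List ℤ) (i : ℕ) : ℤ := (P.take (i + 1)).sum

/-- Every peak is at odd height; by convention the empty path has one peak at height 0
(so `AllPeaksOdd []` is false). -/
def AllPeaksOdd (P : List ℤ) : Prop :=
  (P = [] → Odd (0 : ℤ)) ∧ ∀ i, IsPeak P i → Odd (peakHeight P i)

/-- Every peak is at even height; by convention the empty path has one peak at height 0. -/
def AllPeaksEven (P : List ℤ) : Prop :=
  (P = [] → Even (0 : ℤ)) ∧ ∀ i, IsPeak P i → Even (peakHeight P i)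

/-- The Motzkin path has no flatstep at ground level. -/
def NoGroundFlat (M : List ℤ) : Prop :=
  ∀ i, M[i]? = some 0 → (M.take i).sum ≠ 0

/-- Replacement of a contiguous pair of Dyck steps by a Motzkin step:
(U,U) ↦ U, (D,U) ↦ F, (D,D) ↦ D. -/
def pairStep (a b : ℤ) : ℤ :=
  if a = 1 ∧ b = 1 then 1
  else if a = -1 ∧ b = 1 then 0
  else if a = -1 ∧ b = -1 then -1
  else 0

/-- Split a list of steps into contiguous pairs and replace each pair via `pairStep`. -/
def pairContract (P : List ℤ) : List ℤ :=
  (List.range (P.length / 2)).map fun k => pairStep (P.getD (2 * k) 0) (P.getD (2 * k + 1) 0)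

/-- The number of downsteps ending at ground level. -/
def groundDownCount (P : List ℤ) : ℕ :=
  ((Finset.range P.length).filter fun i =>
    P[i]? = some (-1) ∧ (P.take (i + 1)).sum = 0).card

/-- The number of flatsteps at ground level. -/
def groundFlatCount (M : List ℤ) : ℕ :=
  ((Finset.range M.length).filter fun i =>
    M[i]? = some 0 ∧ (M.take i).sum = 0).card

/-- The number of peaks. -/
def peakCount (P : List ℤ) : ℕ :=
  ((Finset.range P.length).filter fun i =>
    P[i]? = some 1 ∧ P[i + 1]? = some (-1)).card

/-- The number of occurrences of an upstep immediately followed by an upstep. -/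
def uuCount (M : List ℤ) : ℕ :=
  ((Finset.range M.length).filter fun i =>
    M[i]? = some 1 ∧ M[i + 1]? = some 1).card

/-- The number of occurrences of a flatstep immediately followed by an upstep. -/
def fuCount (M : List ℤ) : ℕ :=
  ((Finset.range M.length).filter fun i =>
    M[i]? = some 0 ∧ M[i + 1]? = some 1).card
def expandStep (s : ℤ) : List ℤ := if s = 1 then [1,1] else if s = 0 then [-1,1] else [-1,-1]

def expand : List ℤ → List ℤ
  | [] => []
  | s :: M => expandStep s ++ expand M

lemma expandStep_length (s : ℤ) : (expandStep s).length = 2 := by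
  unfold expandStep; split_ifs <;> rfl

lemma pairContract_cons_cons (a b : ℤ) (Q : List ℤ) :
    pairContract (a :: b :: Q) = pairStep a b :: pairContract Q := by
  unfold pairContract
  have h : (a :: b :: Q).length / 2 = Q.length / 2 + 1 := by
    simp only [List.length_cons]; omega
  rw [h, List.range_succ_eq_map, List.map_cons, List.map_map]
  congr 1

lemma length_pairContract (P : List ℤ) : (pairContract P).length = P.length / 2 := by
  simp [pairContract]

lemma pairStep_cases (a b : ℤ) : pairStep a b = 1 ∨ pairStep a b = 0 ∨ pairStep a b = -1 := by
  unfold pairStep; split_ifs <;> simp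

lemma mem_pairContract {s : ℤ} {P : List ℤ} (h : s ∈ pairContract P) :
    s = 1 ∨ s = 0 ∨ s = -1 := by
  simp only [pairContract, List.mem_map] at h
  obtain ⟨k, -, rfl⟩ := h
  exact pairStep_cases _ _

lemma expand_length (M : List ℤ) : (expand M).length = 2 * M.length := by
  induction M with
  | nil => rfl
  | cons s M ih =>
    simp only [expand, List.length_append, expandStep_length, ih, List.length_cons]
    ring

lemma expand_mem {x : ℤ} {M : List ℤ} (h : x ∈ expand M) : x = 1 ∨ x = -1 := by
  induction M with
  | nil => simp [expand] at h
  | cons s M ih =>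
    simp only [expand, List.mem_append] at h
    rcases h with h | h
    · unfold expandStep at h; split_ifs at h <;> simp at h <;> tauto
    · exact ih h

lemma expand_sum {M : List ℤ} (h : ∀ s ∈ M, s = 1 ∨ s = 0 ∨ s = -1) :
    (expand M).sum = 2 * M.sum := by
  induction M with
  | nil => rfl
  | cons s M ih =>
    have hs := h s (by simp)
    have ihs := ih fun x hx => h x (by simp [hx])
    rcases hs with rfl | rfl | rfl <;>
      simp [expand, expandStep, ihs] <;> ring

lemma expand_take {M : List ℤ} (h : ∀ s ∈ M, s = 1 ∨ s = 0 ∨ s = -1) :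
    ∀ k, ((expand M).take (2 * k)).sum = 2 * ((M.take k).sum) := by
  induction M with
  | nil => intro k; simp [expand]
  | cons s M ih =>
    intro k
    cases k with
    | zero => simp
    | succ k =>
      have hs := h s (by simp)
      have ihs := ih (fun x hx => h x (by simp [hx])) k
      have h2 : 2 * (k + 1) = 2 * k + 1 + 1 := by ring
      rcases hs with rfl | rfl | rfl <;>
        · simp [expand, expandStep, h2, List.take_succ_cons, ihs]
          try ring

lemma expand_pair (M : List ℤ) :
    ∀ k, ¬((expand M)[2 * k]? = some 1 ∧ (expand M)[2 * k + 1]? = some (-1)) := by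
  induction M with
  | nil => intro k; simp [expand]
  | cons s M ih =>
    intro k
    cases k with
    | zero =>
      unfold expand expandStep
      split_ifs <;> simp
    | succ k =>
      have h2 : 2 * (k + 1) = 2 * k + 1 + 1 := by ring
      have ihk := ih k
      unfold expand expandStep
      rw [h2]
      split_ifs <;> simpa using ihk

lemma reconstruct : ∀ (m : ℕ) (Q : List ℤ), Q.length = 2 * m →
    (∀ s ∈ Q, s = 1 ∨ s = -1) →
    (∀ k, ¬(Q[2 * k]? = some 1 ∧ Q[2 * k + 1]? = some (-1))) →
    expand (pairContract Q) = Q := by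
  intro m
  induction m with
  | zero =>
    intro Q hlen _ _
    rw [List.length_eq_zero_iff] at hlen
    subst hlen; rfl
  | succ m ih =>
    intro Q hlen helem hpair
    match Q, hlen with
    | a :: b :: Q', hlen =>
      have hlen' : Q'.length = 2 * m := by simp at hlen; omega
      have helem' : ∀ s ∈ Q', s = 1 ∨ s = -1 := fun s hs => helem s (by simp [hs])
      have hpair' : ∀ k, ¬(Q'[2 * k]? = some 1 ∧ Q'[2 * k + 1]? = some (-1)) := by
        intro k hk
        have h2 : 2 * (k + 1) = 2 * k + 1 + 1 := by ring
        exact hpair (k + 1) (by rw [h2]; simpa using hk)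
      have ha := helem a (by simp)
      have hb := helem b (by simp)
      have hab : ¬(a = 1 ∧ b = -1) := by
        intro ⟨h1, h2⟩
        exact hpair 0 (by simp [h1, h2])
      rw [pairContract_cons_cons]
      show expandStep (pairStep a b) ++ expand (pairContract Q') = _
      rw [ih Q' hlen' helem' hpair']
      rcases ha with rfl | rfl <;> rcases hb with rfl | rfl
      · rfl
      · exact absurd ⟨rfl, rfl⟩ hab
      · rfl
      · rfl

lemma parity_lemma {l : List ℤ} (h : ∀ s ∈ l, s = 1 ∨ s = -1) :
    ∀ m ≤ l.length, ∃ t : ℤ, (l.take m).sum + m = 2 * t := by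
  induction l with
  | nil =>
    intro m hm
    simp only [List.length_nil, Nat.le_zero] at hm
    subst hm; exact ⟨0, by simp⟩
  | cons a l ih =>
    intro m hm
    cases m with
    | zero => exact ⟨0, by simp⟩
    | succ m =>
      obtain ⟨t, ht⟩ := ih (fun s hs => h s (by simp [hs])) m (by simpa using hm)
      have ha := h a (by simp)
      rcases ha with rfl | rfl
      · exact ⟨t + 1, by simp only [List.take_succ_cons, List.sum_cons]; push_cast at ht ⊢; omega⟩
      · exact ⟨t, by simp only [List.take_succ_cons, List.sum_cons]; push_cast at ht ⊢; omega⟩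
lemma dyck_decomp {m : ℕ} {P : List ℤ}
    (hlen : P.length = 2 * m + 2) (hD : IsDyckPath P) (hodd : AllPeaksOdd P) :
    ∃ Q : List ℤ, P = 1 :: (Q ++ [-1]) ∧ Q.length = 2 * m ∧
      (∀ s ∈ Q, s = 1 ∨ s = -1) ∧ Q.sum = 0 ∧ expand (pairContract Q) = Q := by
  obtain ⟨helem, hpre, hsum⟩ := hD
  cases P with
  | nil => simp at hlen
  | cons a R =>
    have hR : R ≠ [] := by
      intro h; subst h; simp at hlen
    obtain ⟨Q, b, rfl⟩ : ∃ Q b, R = Q ++ [b] :=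
      ⟨R.dropLast, R.getLast hR, (List.dropLast_append_getLast hR).symm⟩
    have hQlen : Q.length = 2 * m := by simp at hlen; omega
    have ha : a = 1 := by
      have h0 := hpre 1
      simp [List.take_succ_cons] at h0
      rcases helem a (by simp) with h | h
      · exact h
      · omega
    subst ha
    have hb : b = -1 := by
      have h1 := hpre (2 * m + 1)
      have htake : (Q ++ [b]).take (2 * m) = Q := by
        rw [← hQlen]; exact List.take_left
      rw [List.take_succ_cons, htake] at h1
      simp at h1 hsum
      rcases helem b (by simp) with h | h
      · omega
      · exact h
    subst hb
    have hQsum : Q.sum = 0 := by simp at hsum; omega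
    have helemQ : ∀ s ∈ Q, s = 1 ∨ s = -1 := fun s hs => helem s (by simp [hs])
    have hpair : ∀ k, ¬(Q[2 * k]? = some 1 ∧ Q[2 * k + 1]? = some (-1)) := by
      rintro k ⟨h1, h2⟩
      have hk2 : 2 * k + 1 < Q.length := (List.getElem?_eq_some_iff.mp h2).1
      have hpk : IsPeak (1 :: (Q ++ [-1])) (2 * k + 1) := by
        constructor
        · show (1 :: (Q ++ [-1]) : List ℤ)[2 * k + 1]? = some 1
          rw [List.getElem?_cons_succ, List.getElem?_append_left (by omega)]
          exact h1
        · show (1 :: (Q ++ [-1]) : List ℤ)[2 * k + 1 + 1]? = some (-1)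
          rw [List.getElem?_cons_succ, List.getElem?_append_left hk2]
          exact h2
      have hoddpk := hodd.2 _ hpk
      unfold peakHeight at hoddpk
      obtain ⟨t, ht⟩ := parity_lemma (l := 1 :: (Q ++ [-1])) (by
          intro s hs
          rcases List.mem_cons.mp hs with rfl | hs
          · left; rfl
          · rcases List.mem_append.mp hs with hs | hs
            · exact helemQ s hs
            · right; simpa using hs) (2 * k + 1 + 1) (by simp; omega)
      obtain ⟨u, hu⟩ := hoddpk
      rw [hu] at ht
      push_cast at ht
      omega
    exact ⟨Q, rfl, hQlen, helemQ, hQsum, reconstruct m Q hQlen helemQ hpair⟩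

lemma pairContract_expand {M : List ℤ} (h : ∀ s ∈ M, s = 1 ∨ s = 0 ∨ s = -1) :
    pairContract (expand M) = M := by
  induction M with
  | nil => rfl
  | cons s M ih =>
    have hs := h s (by simp)
    have ihs := ih fun x hx => h x (by simp [hx])
    rcases hs with rfl | rfl | rfl <;>
      · show pairContract (expandStep _ ++ expand M) = _
        norm_num [expandStep, pairContract_cons_cons, ihs, pairStep]

/-- For `n ≥ 1`, the map deleting the first and last steps of a Dyck path and contracting
contiguous pairs (U,U) ↦ U, (D,U) ↦ F, (D,D) ↦ D is a bijection from Dyck paths of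
semilength `n` with all peaks at odd height onto Motzkin paths of length `n - 1`. -/
theorem pairContract_odd_bijOn (n : ℕ) (hn : 1 ≤ n) :
    Set.BijOn (fun P => pairContract ((P.drop 1).dropLast))
      {P : List ℤ | P.length = 2 * n ∧ IsDyckPath P ∧ AllPeaksOdd P}
      {M : List ℤ | M.length = n - 1 ∧ IsMotzkinPath M} := by
  obtain ⟨m, rfl⟩ : ∃ m, n = m + 1 := ⟨n - 1, by omega⟩
  have hf : ∀ Q : List ℤ, (((1 : ℤ) :: (Q ++ [-1])).drop 1).dropLast = Q := by
    intro Q; simp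
  apply Set.InvOn.bijOn (f' := fun M : List ℤ => 1 :: (expand M ++ [-1]))
  · constructor
    · -- LeftInvOn
      rintro P ⟨hlen, hD, hodd⟩
      obtain ⟨Q, rfl, hQlen, helemQ, hQsum, hrec⟩ :=
        dyck_decomp (m := m) (by rw [hlen]; ring) hD hodd
      show (1 : ℤ) :: (expand (pairContract (((1 :: (Q ++ [-1]) : List ℤ).drop 1).dropLast)) ++ [-1])
          = 1 :: (Q ++ [-1])
      rw [hf, hrec]
    · -- RightInvOn
      rintro M ⟨hlenM, hMo⟩
      show pairContract ((((1 : ℤ) :: (expand M ++ [-1])).drop 1).dropLast) = M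
      rw [hf]
      exact pairContract_expand hMo.1
  · -- MapsTo forward
    rintro P ⟨hlen, hD, hodd⟩
    obtain ⟨Q, rfl, hQlen, helemQ, hQsum, hrec⟩ :=
      dyck_decomp (m := m) (by rw [hlen]; ring) hD hodd
    show (pairContract (((1 :: (Q ++ [-1]) : List ℤ).drop 1).dropLast)).length = m + 1 - 1 ∧
      IsMotzkinPath (pairContract (((1 :: (Q ++ [-1]) : List ℤ).drop 1).dropLast))
    rw [hf]
    have hMelem : ∀ s ∈ pairContract Q, s = 1 ∨ s = 0 ∨ s = -1 :=
      fun s hs => mem_pairContract hs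
    have hMlen : (pairContract Q).length = m := by
      rw [length_pairContract, hQlen]; omega
    have hEsum := expand_sum hMelem
    rw [hrec] at hEsum
    have hMsum : (pairContract Q).sum = 0 := by omega
    refine ⟨by omega, hMelem, ?_, hMsum⟩
    intro k
    by_cases hk : k ≤ m
    · have h1 := hD.2.1 (2 * k + 1)
      have htk : ((Q ++ [-1]).take (2 * k)) = Q.take (2 * k) := by
        rw [List.take_append, Nat.sub_eq_zero_of_le (by omega),
          List.take_zero, List.append_nil]
      rw [List.take_succ_cons, List.sum_cons, htk] at h1
      have h2 := expand_take hMelem k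
      rw [hrec] at h2
      omega
    · rw [List.take_of_length_le (by omega)]
      omega
  · -- MapsTo inverse
    rintro M ⟨hlenM, hMelem, hMpre, hMsum⟩
    have hlenM' : M.length = m := by omega
    have hE : (expand M).length = 2 * m := by rw [expand_length, hlenM']
    have helemL : ∀ s ∈ ((1 : ℤ) :: (expand M ++ [-1])), s = 1 ∨ s = -1 := by
      intro s hs
      rcases List.mem_cons.mp hs with rfl | hs
      · left; rfl
      · rcases List.mem_append.mp hs with hs | hs
        · exact expand_mem hs
        · right; simpa using hs
    refine ⟨by simp [hE]; omega, ⟨helemL, ?_, ?_⟩, ?_⟩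
    · -- prefix sums
      intro k
      cases k with
      | zero => simp
      | succ j =>
        rw [List.take_succ_cons, List.sum_cons]
        have key : -1 ≤ ((expand M ++ [-1]).take j).sum := by
          by_cases hj : j ≤ (expand M).length
          · have htk : ((expand M ++ [-1]).take j) = (expand M).take j := by
              rw [List.take_append, Nat.sub_eq_zero_of_le hj,
                List.take_zero, List.append_nil]
            rw [htk]
            rcases Nat.even_or_odd j with ⟨q, hq⟩ | ⟨q, hq⟩
            · subst hq
              have h2 := expand_take hMelem q
              rw [show q + q = 2 * q by ring]
              have := hMpre q
              omega
            · rw [hq, List.take_succ, List.sum_append]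
              have h2 := expand_take hMelem q
              have h3 := hMpre q
              cases hE2 : (expand M)[2 * q]? with
              | none => simp [hE2]; omega
              | some a =>
                obtain ⟨hlt, ha⟩ := List.getElem?_eq_some_iff.mp hE2
                have := expand_mem (ha ▸ List.getElem_mem hlt)
                simp [hE2]
                omega
          · rw [List.take_of_length_le (by simp; omega), List.sum_append,
              expand_sum hMelem, hMsum]
            simp
        omega
    · -- total sum
      simp [expand_sum hMelem, hMsum]
    · -- AllPeaksOdd
      refine ⟨by intro h; simp at h, ?_⟩
      rintro i ⟨h1, h2⟩
      have hi1 : i + 1 < ((1 : ℤ) :: (expand M ++ [-1])).length := (List.getElem?_eq_some_iff.mp h2).1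
      rcases Nat.even_or_odd i with ⟨j, hj⟩ | ⟨j, hj⟩
      · unfold peakHeight
        obtain ⟨t, ht⟩ := parity_lemma helemL (i + 1) (by omega)
        refine ⟨t - j - 1, ?_⟩
        subst hj
        push_cast at ht ⊢
        omega
      · exfalso
        rw [hj] at h1 h2
        rw [List.getElem?_cons_succ] at h1
        rw [show 2 * j + 1 + 1 = (2 * j + 1) + 1 by ring, List.getElem?_cons_succ] at h2
        by_cases h2j : 2 * j < (expand M).length
        · have h2j1 : 2 * j + 1 < (expand M).length := by omega
          rw [List.getElem?_append_left h2j] at h1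
          rw [List.getElem?_append_left h2j1] at h2
          exact expand_pair M j ⟨h1, h2⟩
        · rcases Nat.eq_or_lt_of_le (Nat.le_of_not_lt h2j) with heq | hlt
          · rw [← heq] at h1
            rw [List.getElem?_concat_length] at h1
            simp at h1
          · rw [List.getElem?_eq_none_iff.mpr (by simp; omega)] at h1
            simp at h1
end

section
/- For all integers n ≥ 1 and p ≥ 0, the number of Dyck paths of semilength n with all peaks at odd height and exactly p peaks equals the number of Motzkin paths M of length n that begin with a flatstep and satisfy (u(M) − uu(M)) + (f(M) − fu(M)) = p, where u(M) is the number of upsteps of M, uu(M) is the number of occurrences in M of an upstep immediately followed by an upstep, f(M) is the number of flatsteps of M, and fu(M) is the number of occurrences in M of a flatstep immediately followed by an upstep. -/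


def fstE (s : ℤ) : ℤ := if s = 1 then 1 else -1
def sndE (s : ℤ) : ℤ := if s = -1 then -1 else 1
def E (s : ℤ) : List ℤ := [fstE s, sndE s]

lemma bindE_length (T : List ℤ) : (T.flatMap E).length = 2 * T.length := by
  induction T with
  | nil => simp
  | cons a T ih => simp [E, ih]; ring

lemma bindE_get_even (T : List ℤ) (k : ℕ) :
    (T.flatMap E)[2 * k]? = (T[k]?).map fstE := by
  induction T generalizing k with
  | nil => simp
  | cons a T ih =>
    cases k with
    | zero => simp [E]
    | succ k =>
      have h2 : 2 * (k + 1) = (2 * k) + 1 + 1 := by ring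
      rw [h2]
      simpa [E] using ih k

lemma bindE_get_odd (T : List ℤ) (k : ℕ) :
    (T.flatMap E)[2 * k + 1]? = (T[k]?).map sndE := by
  induction T generalizing k with
  | nil => simp
  | cons a T ih =>
    cases k with
    | zero => simp [E]
    | succ k =>
      have h2 : 2 * (k + 1) + 1 = (2 * k + 1) + 1 + 1 := by ring
      rw [h2]
      simpa [E] using ih k

lemma mem_bindE (T : List ℤ) (s : ℤ) (hs : s ∈ T.flatMap E) : s = 1 ∨ s = -1 := by
  rw [List.mem_flatMap] at hs
  obtain ⟨a, -, ha⟩ := hs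
  simp [E, fstE, sndE] at ha
  rcases ha with h | h <;> split at h <;> simp [h]

lemma bindE_take_even (T : List ℤ) (hT : ∀ s ∈ T, s = 1 ∨ s = 0 ∨ s = -1) (k : ℕ) :
    ((T.flatMap E).take (2 * k)).sum = 2 * (T.take k).sum := by
  induction T generalizing k with
  | nil => simp
  | cons a T ih =>
    cases k with
    | zero => simp
    | succ k =>
      have h2 : 2 * (k + 1) = (2 * k) + 2 := by ring
      rw [h2]
      have ha := hT a (by simp)
      have hE : fstE a + sndE a = 2 * a := by
        rcases ha with rfl | rfl | rfl <;> norm_num [fstE, sndE]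
      have := ih (fun s hs => hT s (by simp [hs])) k
      simp [E, List.take_succ_cons, this]
      linarith

lemma bindE_sum (T : List ℤ) (hT : ∀ s ∈ T, s = 1 ∨ s = 0 ∨ s = -1) :
    (T.flatMap E).sum = 2 * T.sum := by
  have h := bindE_take_even T hT T.length
  rw [List.take_of_length_le (bindE_length T).le] at h
  simpa using h


lemma bindE_take_ge (T : List ℤ) (hT : ∀ s ∈ T, s = 1 ∨ s = 0 ∨ s = -1)
    (hpre : ∀ k, 0 ≤ (T.take k).sum) (m : ℕ) : -1 ≤ ((T.flatMap E).take m).sum := by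
  have hTs : 0 ≤ T.sum := by simpa using hpre T.length
  by_cases hm : m ≤ (T.flatMap E).length
  · rcases Nat.even_or_odd m with ⟨k, hk⟩ | ⟨k, hk⟩
    · have hk' : m = 2 * k := by omega
      rw [hk', bindE_take_even T hT k]
      have := hpre k; linarith
    · have hk' : m = 2 * k + 1 := by omega
      have hlt : 2 * k < (T.flatMap E).length := by omega
      rw [hk', List.sum_take_succ _ _ hlt, bindE_take_even T hT k]
      have h1 := hpre k
      have h2 := mem_bindE T _ (List.getElem_mem hlt)
      rcases h2 with h2 | h2 <;> rw [h2] <;> linarith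
  · rw [List.take_of_length_le (by omega), bindE_sum T hT]
    linarith

lemma Phi_take (T : List ℤ) (hT : ∀ s ∈ T, s = 1 ∨ s = 0 ∨ s = -1)
    (hpre : ∀ k, 0 ≤ (T.take k).sum) (hsum : T.sum = 0) (k : ℕ) :
    0 ≤ ((1 :: (T.flatMap E ++ [-1])).take k).sum := by
  cases k with
  | zero => simp
  | succ k =>
    rw [List.take_succ_cons, List.sum_cons, List.take_append,
      List.sum_append]
    by_cases hk : k ≤ (T.flatMap E).length
    · have h1 := bindE_take_ge T hT hpre k
      have h2 : k - (T.flatMap E).length = 0 := by omega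
      rw [h2]; simp; linarith
    · rw [List.take_of_length_le (by omega), bindE_sum T hT, hsum]
      have : (List.take (k - (T.flatMap E).length) [(-1 : ℤ)]).sum = -1 := by
        have : k - (T.flatMap E).length ≥ 1 := by omega
        rw [List.take_of_length_le (by simpa using this)]; simp
      rw [this]; simp

lemma par (L : List ℤ) (h : ∀ s ∈ L, s = 1 ∨ s = -1) : Even (L.sum + L.length) := by
  induction L with
  | nil => simp
  | cons a L ih =>
    have ha := h a (by simp)
    have hL := ih (fun s hs => h s (by simp [hs]))
    have heq : (a :: L).sum + ((a :: L).length : ℤ) = (L.sum + L.length) + (a + 1) := by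
      simp [List.sum_cons, List.length_cons]; ring
    rw [heq]
    rcases ha with rfl | rfl
    · exact hL.add (by norm_num)
    · exact hL.add (by norm_num)

open Classical in
noncomputable def ind (q : Prop) : ℕ := if q then 1 else 0

lemma ind_eq (q : Prop) [Decidable q] : (if q then 1 else 0) = ind q := by
  by_cases h : q <;> simp [ind, h]

lemma card_filter_eq_sum (m : ℕ) (Q : ℕ → Prop) [DecidablePred Q] :
    ((Finset.range m).filter Q).card = ∑ i ∈ Finset.range m, ind (Q i) := by
  rw [Finset.card_filter]; exact Finset.sum_congr rfl fun i _ => ind_eq _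

lemma count_eq_sum (l : List ℤ) (a : ℤ) :
    l.count a = ∑ i ∈ Finset.range l.length, ind (l[i]? = some a) := by
  induction l with
  | nil => simp
  | cons x t ih =>
    rw [List.length_cons, Finset.sum_range_succ']
    simp only [List.getElem?_cons_succ, List.getElem?_cons_zero]
    rw [← ih]
    by_cases hxa : x = a <;> simp [List.count_cons, hxa, ind]


lemma Pget (T : List ℤ) (m : ℕ) : (1 :: (T.flatMap E ++ [-1]) : List ℤ)[m+1]? =
    if m < 2*T.length then (T.flatMap E)[m]?
    else if m = 2*T.length then some (-1) else none := by
  rw [List.getElem?_cons_succ]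
  split_ifs with h1 h2
  · exact List.getElem?_append_left (by rw [bindE_length]; omega)
  · rw [List.getElem?_append_right (by rw [bindE_length]; omega), bindE_length, h2]
    simp
  · apply List.getElem?_eq_none
    rw [List.length_append, bindE_length]
    simp; omega

lemma fstE_eq_one {t : ℤ} : fstE t = 1 ↔ t = 1 := by
  unfold fstE; split <;> simp_all
lemma fstE_eq_negone {t : ℤ} : fstE t = -1 ↔ t ≠ 1 := by
  unfold fstE; split <;> simp_all
lemma sndE_eq_one {t : ℤ} : sndE t = 1 ↔ t ≠ -1 := by
  unfold sndE; split <;> simp_all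

lemma no_odd_peak_Phi (T : List ℤ) (j : ℕ) :
    ¬ (((1 :: (T.flatMap E ++ [-1]) : List ℤ)[2*j+1]? = some 1) ∧
       ((1 :: (T.flatMap E ++ [-1]) : List ℤ)[2*j+1+1]? = some (-1))) := by
  rintro ⟨h1, h2⟩
  rw [show 2*j+1 = (2*j)+1 from rfl, Pget] at h1
  rw [Pget] at h2
  by_cases hj : 2*j < 2*T.length
  · rw [if_pos hj, bindE_get_even] at h1
    obtain ⟨t, ht, hft⟩ : ∃ t, T[j]? = some t ∧ fstE t = 1 := by
      cases hgt : T[j]? with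
      | none => rw [hgt] at h1; simp at h1
      | some t => rw [hgt] at h1; simp at h1; exact ⟨t, rfl, h1⟩
    have ht1 : t = 1 := fstE_eq_one.mp hft
    rw [if_pos (by omega), bindE_get_odd, ht] at h2
    simp [ht1, sndE] at h2
  · rw [if_neg hj] at h1
    split_ifs at h1 <;> simp_all

lemma getsome {T : List ℤ} {j : ℕ} (hj : j < T.length) : ∃ t, T[j]? = some t ∧ t ∈ T := by
  cases hgt : T[j]? with
  | none => rw [List.getElem?_eq_none_iff] at hgt; omega
  | some t => exact ⟨t, rfl, List.mem_of_getElem? hgt⟩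

lemma even_peak_iff (T : List ℤ) (hT : ∀ s ∈ T, s = 1 ∨ s = 0 ∨ s = -1) (j : ℕ)
    (hj : j < T.length + 1) :
    ((((1 :: (T.flatMap E ++ [-1])) : List ℤ)[2*j]? = some 1) ∧
     (((1 :: (T.flatMap E ++ [-1])) : List ℤ)[2*j+1]? = some (-1))) ↔
    (((((0::T) : List ℤ)[j]? = some 1) ∨ (((0::T) : List ℤ)[j]? = some 0)) ∧
      ¬ (((0::T) : List ℤ)[j+1]? = some 1)) := by
  cases j with
  | zero =>
    rw [show (2*0 : ℕ) = 0 from rfl, show (2*0+1 : ℕ) = 0+1 from rfl, Pget]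
    simp only [List.getElem?_cons_zero, List.getElem?_cons_succ]
    by_cases h0 : 0 < T.length
    · rw [if_pos (by omega), show (0:ℕ) = 2*0 from rfl, bindE_get_even]
      obtain ⟨t, ht, htm⟩ := getsome h0
      rw [ht]
      rcases hT t htm with rfl | rfl | rfl <;> simp [fstE]
    · have hT0 : T = [] := by rw [← List.length_eq_zero_iff]; omega
      subst hT0; simp
  | succ j' =>
    have hj' : j' < T.length := by omega
    obtain ⟨t, ht, htm⟩ := getsome hj'
    have h2j : 2*(j'+1) = (2*j'+1)+1 := by ring
    have h2j' : 2*(j'+1)+1 = (2*j'+2)+1 := by ring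
    rw [h2j', h2j, Pget, Pget, if_pos (by omega), bindE_get_odd, ht]
    simp only [List.getElem?_cons_succ, Option.map_some]
    by_cases hend : j' + 1 < T.length
    · rw [if_pos (by omega), show 2*j'+2 = 2*(j'+1) from by ring, bindE_get_even]
      obtain ⟨t', ht', htm'⟩ := getsome hend
      rw [ht', ht]
      rcases hT t htm with rfl | rfl | rfl <;>
        rcases hT t' htm' with rfl | rfl | rfl <;> simp [fstE, sndE]
    · rw [if_neg (by omega), if_pos (by omega), ht,
        List.getElem?_eq_none (by omega)]
      rcases hT t htm with rfl | rfl | rfl <;> simp [sndE]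


lemma ind_congr {q r : Prop} (h : q ↔ r) : ind q = ind r := by
  unfold ind; split_ifs with h1 h2 <;> tauto

lemma ind_false {q : Prop} (h : ¬ q) : ind q = 0 := by simp [ind, h]

lemma cnt_double (m : ℕ) (f : ℕ → ℕ) :
    ∑ i ∈ Finset.range (2*m), f i = ∑ j ∈ Finset.range m, (f (2*j) + f (2*j+1)) := by
  induction m with
  | zero => simp
  | succ m ih =>
    rw [show 2*(m+1) = (2*m+1)+1 from by ring, Finset.sum_range_succ,
      Finset.sum_range_succ, Finset.sum_range_succ, ih]
    ring

lemma ind_arith (A B C : Prop) (hAB : ¬(A ∧ B)) :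
    ((ind A : ℤ) - ind (A ∧ C)) + ((ind B : ℤ) - ind (B ∧ C)) = ind ((A ∨ B) ∧ ¬C) := by
  classical
  by_cases hA : A <;> by_cases hB : B <;> by_cases hC : C <;>
    simp [ind, hA, hB, hC] <;> tauto

lemma stat_eq_peak (T : List ℤ) (hT : ∀ s ∈ T, s = 1 ∨ s = 0 ∨ s = -1) :
    (((0::T : List ℤ).count 1 : ℤ) - uuCount (0::T)) +
      (((0::T : List ℤ).count 0 : ℤ) - fuCount (0::T)) =
    (peakCount (1 :: (T.flatMap E ++ [-1])) : ℤ) := by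
  set M : List ℤ := 0 :: T with hM
  set P : List ℤ := 1 :: (T.flatMap E ++ [-1]) with hPd
  have hMlen : M.length = T.length + 1 := by simp [hM]
  have hPlen : P.length = 2 * (T.length + 1) := by
    rw [hPd, List.length_cons, List.length_append, bindE_length]
    simp; ring
  have hpeak : (peakCount P : ℤ) =
      ∑ j ∈ Finset.range (T.length + 1),
        (ind (((M[j]? = some 1) ∨ (M[j]? = some 0)) ∧ ¬ (M[j+1]? = some 1)) : ℤ) := by
    rw [peakCount, hPlen, card_filter_eq_sum, cnt_double]
    push_cast
    refine Finset.sum_congr rfl fun j hj => ?_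
    rw [Finset.mem_range] at hj
    rw [ind_false (no_odd_peak_Phi T j), ind_congr (even_peak_iff T hT j hj)]
    push_cast; ring
  have hc1 : (M.count 1 : ℤ) = ∑ j ∈ Finset.range (T.length + 1),
      (ind (M[j]? = some 1) : ℤ) := by
    rw [count_eq_sum, hMlen]; push_cast; rfl
  have hc0 : (M.count 0 : ℤ) = ∑ j ∈ Finset.range (T.length + 1),
      (ind (M[j]? = some 0) : ℤ) := by
    rw [count_eq_sum, hMlen]; push_cast; rfl
  have huu : (uuCount M : ℤ) = ∑ j ∈ Finset.range (T.length + 1),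
      (ind (M[j]? = some 1 ∧ M[j+1]? = some 1) : ℤ) := by
    rw [uuCount, hMlen, card_filter_eq_sum]; push_cast; rfl
  have hfu : (fuCount M : ℤ) = ∑ j ∈ Finset.range (T.length + 1),
      (ind (M[j]? = some 0 ∧ M[j+1]? = some 1) : ℤ) := by
    rw [fuCount, hMlen, card_filter_eq_sum]; push_cast; rfl
  rw [hpeak, hc1, hc0, huu, hfu, ← Finset.sum_sub_distrib, ← Finset.sum_sub_distrib,
    ← Finset.sum_add_distrib]
  refine Finset.sum_congr rfl fun j hj => ?_
  exact ind_arith _ _ _ (by rintro ⟨h1, h2⟩; rw [h1] at h2; simp at h2)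

lemma odd_of_even_add_odd {s : ℤ} {j : ℕ} (h : Even (s + (2*j+1 : ℕ))) : Odd s := by
  rcases h with ⟨c, hc⟩
  refine ⟨c - (j : ℤ) - 1, ?_⟩
  push_cast at hc ⊢
  linarith

lemma Phi_elem (T : List ℤ) : ∀ s ∈ (1 :: (T.flatMap E ++ [-1]) : List ℤ), s = 1 ∨ s = -1 := by
  intro s hs
  rcases List.mem_cons.mp hs with rfl | hs
  · left; rfl
  · rcases List.mem_append.mp hs with hs | hs
    · exact mem_bindE T s hs
    · right; simpa using hs

lemma Phi_spec (T : List ℤ) (hT : ∀ s ∈ T, s = 1 ∨ s = 0 ∨ s = -1)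
    (hpre : ∀ k, 0 ≤ (T.take k).sum) (hsum : T.sum = 0) :
    (1 :: (T.flatMap E ++ [-1]) : List ℤ).length = 2 * (T.length + 1) ∧
    IsDyckPath (1 :: (T.flatMap E ++ [-1])) ∧
    AllPeaksOdd (1 :: (T.flatMap E ++ [-1])) ∧
    (((0::T : List ℤ).count 1 : ℤ) - uuCount (0::T)) +
      (((0::T : List ℤ).count 0 : ℤ) - fuCount (0::T)) =
    (peakCount (1 :: (T.flatMap E ++ [-1])) : ℤ) := by
  set P : List ℤ := 1 :: (T.flatMap E ++ [-1]) with hPd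
  have hPlen : P.length = 2 * (T.length + 1) := by
    rw [hPd, List.length_cons, List.length_append, bindE_length]
    simp; ring
  refine ⟨hPlen, ⟨Phi_elem T, Phi_take T hT hpre hsum, ?_⟩, ⟨?_, ?_⟩, stat_eq_peak T hT⟩
  · rw [hPd]
    simp [bindE_sum T hT, hsum]
  · intro h; rw [hPd] at h; exact absurd h (by simp)
  · intro i hpk
    rcases Nat.even_or_odd i with ⟨j, hj⟩ | ⟨j, hj⟩
    · have hlt : i < P.length := (List.getElem?_eq_some_iff.mp hpk.1).1
      have hpar := par (P.take (i+1)) (fun s hs => Phi_elem T s (List.mem_of_mem_take hs))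
      rw [List.length_take, min_eq_left (by omega)] at hpar
      unfold peakHeight
      have hij : i + 1 = 2*j+1 := by omega
      rw [hij] at hpar ⊢
      exact odd_of_even_add_odd hpar
    · exact absurd (by rw [show 2*j+1 = i from by omega]; exact hpk.1)
        (fun h1 => (no_odd_peak_Phi T j ⟨h1, by rw [show 2*j+1+1 = i+1 from by omega]; exact hpk.2⟩))

def myC : List ℤ → List ℤ
  | x :: y :: L => pairStep x y :: myC L
  | _ => []

lemma E_pairStep {x y : ℤ} (hx : x = 1 ∨ x = -1) (hy : y = 1 ∨ y = -1)
    (hUD : ¬(x = 1 ∧ y = -1)) : E (pairStep x y) = [x, y] := by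
  rcases hx with rfl | rfl <;> rcases hy with rfl | rfl
  · norm_num [pairStep, E, fstE, sndE]
  · exact absurd ⟨rfl, rfl⟩ hUD
  · norm_num [pairStep, E, fstE, sndE]
  · norm_num [pairStep, E, fstE, sndE]

lemma recon : ∀ (N : ℕ) (mid : List ℤ), mid.length ≤ N →
    (∀ s ∈ mid, s = 1 ∨ s = -1) → Even mid.length →
    (∀ k, ¬(mid[2*k]? = some 1 ∧ mid[2*k+1]? = some (-1))) →
    (myC mid).flatMap E = mid ∧ ∀ s ∈ myC mid, s = 1 ∨ s = 0 ∨ s = -1 := by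
  intro N
  induction N with
  | zero =>
    intro mid hN _ _ _
    have : mid = [] := List.length_eq_zero_iff.mp (by omega)
    subst this; simp [myC]
  | succ N ih =>
    intro mid hN helem heven hUD
    match mid with
    | [] => simp [myC]
    | [x] => simp at heven
    | x :: y :: L =>
      have hx := helem x (by simp)
      have hy := helem y (by simp)
      have hUD0 := hUD 0
      simp only [show (2*0 : ℕ) = 0 from rfl, List.getElem?_cons_zero, zero_add,
        List.getElem?_cons_succ, Option.some.injEq] at hUD0
      have hEps : E (pairStep x y) = [x, y] := E_pairStep hx hy (by tauto)
      have hlen : L.length ≤ N := by simp at hN; omega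
      have hLelem : ∀ s ∈ L, s = 1 ∨ s = -1 := fun s hs => helem s (by simp [hs])
      have hLeven : Even L.length := by
        simp only [List.length_cons] at heven
        rcases heven with ⟨c, hc⟩; exact ⟨c - 1, by omega⟩
      have hLUD : ∀ k, ¬(L[2*k]? = some 1 ∧ L[2*k+1]? = some (-1)) := by
        intro k hk
        apply hUD (k+1)
        have e1 : 2*(k+1) = 2*k+1+1 := by ring
        have e2 : 2*(k+1)+1 = (2*k+1)+1+1 := by ring
        rw [e2, e1]
        simp only [List.getElem?_cons_succ]
        exact ⟨hk.1, hk.2⟩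
      obtain ⟨ihE, ihel⟩ := ih L hlen hLelem hLeven hLUD
      constructor
      · show (pairStep x y :: myC L).flatMap E = x :: y :: L
        rw [List.flatMap_cons, hEps, ihE]; rfl
      · intro s hs
        rcases List.mem_cons.mp hs with rfl | hs
        · rcases hx with rfl | rfl <;> rcases hy with rfl | rfl <;>
            norm_num [pairStep]
        · exact ihel s hs

lemma bindE_inj : ∀ (T1 T2 : List ℤ), (∀ s ∈ T1, s = 1 ∨ s = 0 ∨ s = -1) →
    (∀ s ∈ T2, s = 1 ∨ s = 0 ∨ s = -1) → T1.flatMap E = T2.flatMap E → T1 = T2 := by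
  intro T1
  induction T1 with
  | nil =>
    intro T2 _ _ h
    cases T2 with
    | nil => rfl
    | cons b T2 => simp [E] at h
  | cons a T1 ih =>
    intro T2 h1 h2 h
    cases T2 with
    | nil => simp [E] at h
    | cons b T2 =>
      rw [List.flatMap_cons, List.flatMap_cons] at h
      unfold E at h
      simp only [List.cons_append, List.nil_append, List.cons.injEq] at h
      obtain ⟨hf, hs, ht⟩ := h
      have hab : a = b := by
        rcases h1 a (by simp) with rfl | rfl | rfl <;>
          rcases h2 b (by simp) with rfl | rfl | rfl <;>
            first
              | rfl
              | simp [fstE, sndE] at hf hs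
      subst hab
      rw [ih T2 (fun s hs => h1 s (by simp [hs])) (fun s hs => h2 s (by simp [hs])) ht]

lemma even_of_even_add_even {s : ℤ} {j : ℕ} (h : Even (s + (2*j : ℕ))) : Even s := by
  rcases h with ⟨c, hc⟩
  refine ⟨c - j, ?_⟩
  push_cast at hc ⊢
  linarith

/-- For `n ≥ 1` and `p ≥ 0`, the number of Dyck paths of semilength `n` with all peaks at
odd height and exactly `p` peaks equals the number of Motzkin paths `M` of length `n`
beginning with a flatstep that satisfy `(u(M) - uu(M)) + (f(M) - fu(M)) = p`. -/
theorem odd_peaks_count_statistic (n p : ℕ) (hn : 1 ≤ n) :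
    {P : List ℤ | P.length = 2 * n ∧ IsDyckPath P ∧ AllPeaksOdd P ∧
      peakCount P = p}.ncard =
    {M : List ℤ | M.length = n ∧ IsMotzkinPath M ∧ M.head? = some 0 ∧
      ((M.count 1 : ℤ) - uuCount M) + ((M.count 0 : ℤ) - fuCount M) = p}.ncard := by
  classical
  have key : {P : List ℤ | P.length = 2 * n ∧ IsDyckPath P ∧ AllPeaksOdd P ∧
      peakCount P = p} =
      (fun M : List ℤ => 1 :: (M.tail.flatMap E ++ [-1])) ''
      {M : List ℤ | M.length = n ∧ IsMotzkinPath M ∧ M.head? = some 0 ∧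
      ((M.count 1 : ℤ) - uuCount M) + ((M.count 0 : ℤ) - fuCount M) = p} := by
    ext P
    simp only [Set.mem_setOf_eq, Set.mem_image]
    constructor
    · rintro ⟨hPlen, hDy, hOdd, hpk⟩
      cases P with
      | nil => simp at hPlen; omega
      | cons a Q =>
        have ha : a = 1 := by
          have h1 := hDy.1 a (by simp)
          have h2 := hDy.2.1 1
          simp [List.take_succ_cons] at h2
          rcases h1 with rfl | rfl
          · rfl
          · norm_num at h2
        subst ha
        have hQne : Q ≠ [] := by
          intro h; subst h; simp at hPlen; omega
        set mid := Q.dropLast with hmidd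
        set b := Q.getLast hQne with hbd
        have hQ : mid ++ [b] = Q := List.dropLast_append_getLast hQne
        have hQlen : Q.length = 2*n - 1 := by simp at hPlen; omega
        have hmidlen : mid.length = 2*n - 2 := by
          rw [hmidd, List.length_dropLast]; omega
        have hQel : ∀ s ∈ Q, s = 1 ∨ s = -1 := fun s hs => hDy.1 s (by simp [hs])
        have hmidel : ∀ s ∈ mid, s = 1 ∨ s = -1 :=
          fun s hs => hQel s ((List.dropLast_sublist Q).subset hs)
        have hb : b = 1 ∨ b = -1 := hQel b (List.getLast_mem hQne)
        have hsumP : 1 + (mid.sum + b) = 0 := by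
          have := hDy.2.2
          rw [← hQ] at this
          simpa using this
        have hmidnn : 0 ≤ mid.sum := by
          have htk := hDy.2.1 (mid.length + 1)
          rw [List.take_succ_cons, ← hQ, List.take_left] at htk
          simp at htk
          have hpar := par mid hmidel
          rw [hmidlen] at hpar
          have heq : Even ((2*n-2 : ℕ) : ℤ) := by
            refine ⟨(n : ℤ) - 1, ?_⟩; push_cast [Nat.cast_sub (by omega : 2 ≤ 2*n)]; ring
          rcases (Int.even_add.mp hpar).mpr heq with ⟨c, hc⟩
          omega
        have hbval : b = -1 ∧ mid.sum = 0 := by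
          rcases hb with h | h
          · exfalso; rw [h] at hsumP; omega
          · exact ⟨h, by rw [h] at hsumP; omega⟩
        have hUDmid : ∀ k, ¬(mid[2*k]? = some 1 ∧ mid[2*k+1]? = some (-1)) := by
          rintro k ⟨hk1, hk2⟩
          have hb1 : 2*k < mid.length := (List.getElem?_eq_some_iff.mp hk1).1
          have hb2 : 2*k+1 < mid.length := (List.getElem?_eq_some_iff.mp hk2).1
          have hpk1 : (1 :: Q : List ℤ)[2*k+1]? = some 1 := by
            rw [List.getElem?_cons_succ, ← hQ, List.getElem?_append_left hb1]; exact hk1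
          have hpk2 : (1 :: Q : List ℤ)[2*k+1+1]? = some (-1) := by
            rw [List.getElem?_cons_succ, ← hQ, List.getElem?_append_left hb2]; exact hk2
          have hodd := hOdd.2 (2*k+1) ⟨hpk1, hpk2⟩
          have hpar := par ((1 :: Q : List ℤ).take (2*k+1+1))
            (fun s hs => hDy.1 s (List.mem_of_mem_take hs))
          rw [List.length_take, min_eq_left (by simp; omega)] at hpar
          have : Even (peakHeight (1 :: Q) (2*k+1)) := by
            unfold peakHeight
            exact even_of_even_add_even (j := k+1)
              (by rw [show 2*(k+1) = 2*k+1+1 from by ring]; exact hpar)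
          exact (Int.not_odd_iff_even.mpr this) hodd
        obtain ⟨hE, hTel⟩ := recon mid.length mid le_rfl hmidel
          ⟨n-1, by omega⟩ hUDmid
        set T := myC mid with hTd
        have hTlen : 2 * T.length = mid.length := by
          rw [← bindE_length T, hE]
        have hTsum : T.sum = 0 := by
          have := bindE_sum T hTel
          rw [hE, hbval.2] at this
          omega
        have hTpre : ∀ k, 0 ≤ (T.take k).sum := by
          intro k
          by_cases hk : k ≤ T.length
          · have h1 := bindE_take_even T hTel k
            rw [hE] at h1
            have h2 : (1 :: Q : List ℤ).take (2*k+1) = 1 :: mid.take (2*k) := by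
              rw [List.take_succ_cons, ← hQ, List.take_append,
                Nat.sub_eq_zero_of_le (by omega), List.take_zero, List.append_nil]
            have h3 := hDy.2.1 (2*k+1)
            rw [h2] at h3
            simp at h3
            omega
          · rw [List.take_of_length_le (by omega)]
            exact le_of_eq hTsum.symm
        have hspec := Phi_spec T hTel hTpre hTsum
        have hPhiM : (1 :: (T.flatMap E ++ [-1]) : List ℤ) = 1 :: Q := by
          rw [hE]
          rw [← hQ, hbval.1]
        refine ⟨0 :: T, ⟨?_, ⟨?_, ?_, ?_⟩, rfl, ?_⟩, ?_⟩
        · simp; omega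
        · intro s hs
          rcases List.mem_cons.mp hs with rfl | hs
          · right; left; rfl
          · exact hTel s hs
        · intro k
          cases k with
          | zero => simp
          | succ k => simpa [List.take_succ_cons] using hTpre k
        · simpa using hTsum
        · rw [hspec.2.2.2, hPhiM, hpk]
        · simpa using hPhiM
    · rintro ⟨M, ⟨hMlen, hMot, hhead, hstat⟩, rfl⟩
      cases M with
      | nil => simp at hhead
      | cons a T =>
        have ha : a = 0 := by simpa using hhead
        subst ha
        have hT : ∀ s ∈ T, s = 1 ∨ s = 0 ∨ s = -1 := fun s hs => hMot.1 s (by simp [hs])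
        have hpre : ∀ k, 0 ≤ (T.take k).sum := by
          intro k
          have := hMot.2.1 (k+1)
          simpa [List.take_succ_cons] using this
        have hsum : T.sum = 0 := by simpa using hMot.2.2
        obtain ⟨hlen2, hDy, hOdd, hstatP⟩ := Phi_spec T hT hpre hsum
        have hTn : T.length + 1 = n := by simpa using hMlen
        refine ⟨by simpa [← hTn] using hlen2, hDy, hOdd, ?_⟩
        have : (peakCount (1 :: (T.flatMap E ++ [-1])) : ℤ) = (p : ℤ) := by
          rw [← hstatP]; exact hstat
        exact_mod_cast this
  rw [key]
  apply Set.ncard_image_of_injOn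
  rintro M1 ⟨h1len, h1M, h1h, -⟩ M2 ⟨h2len, h2M, h2h, -⟩ heq
  cases M1 with
  | nil => simp at h1h
  | cons a1 T1 =>
    cases M2 with
    | nil => simp at h2h
    | cons a2 T2 =>
      have ha1 : a1 = 0 := by simpa using h1h
      have ha2 : a2 = 0 := by simpa using h2h
      subst ha1; subst ha2
      simp only [List.tail_cons, List.cons.injEq, true_and] at heq
      have hlen : (T1.flatMap E).length = (T2.flatMap E).length := by
        rw [bindE_length, bindE_length]
        have : T1.length + 1 = n := by simpa using h1len
        have : T2.length + 1 = n := by simpa using h2len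
        omega
      have := (List.append_inj heq hlen).1
      rw [bindE_inj T1 T2 (fun s hs => h1M.1 s (by simp [hs]))
        (fun s hs => h2M.1 s (by simp [hs])) this]
end
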